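/- arXiv:2310.14862 — 3 statements merged into one kernel-verified Lean document; each statement's English description precedes it below -/
import Mathlib

section
/- The sequence (λ_k)^k is strictly decreasing in k for k ≥ 3; that is, for all integers k ≥ 3, λ_k^k > λ_{k+1}^{k+1}. -/
theorem two_mul_add_one_lt_pow_succ_of_le {a x : ℝ} {k : ℕ} (ha : 1 < a)
    (hak : 2 * a + 1 ≤ a ^ k) (hax : a ≤ x) : 2 * x + 1 < x ^ (k + 1) :=
  calc 2 * x + 1 < (2 * a + 1) * x := by nlinarith
    _ ≤ a ^ k * x := by gcongr; linarith
    _ ≤ x ^ k * x := by gcongr; linarith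
    _ = x ^ (k + 1) := (pow_succ x k).symm

theorem lambda_pow_strict_anti_general (k : ℕ) (a b : ℝ)
    (ha1 : 1 < a) (ha2 : a ^ k = 2 * a + 1)
    (hb2 : b ^ (k + 1) = 2 * b + 1) :
    a ^ k > b ^ (k + 1) := by
  have hba : b < a := by
    by_contra! hab
    exact (two_mul_add_one_lt_pow_succ_of_le ha1 ha2.ge hab).ne' hb2
  linarith

/-- The sequence `(λ_k)^k` is strictly decreasing for `k ≥ 3`. -/
theorem lambda_pow_strict_anti (k : ℕ) (hk : 3 ≤ k) (a b : ℝ)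
    (ha1 : 1 < a) (ha2 : a ^ k = 2 * a + 1)
    (hb1 : 1 < b) (hb2 : b ^ (k + 1) = 2 * b + 1) :
    a ^ k > b ^ (k + 1) :=
  lambda_pow_strict_anti_general k a b ha1 ha2 hb2
end

section
/- Let n ≥ 6 be a composite integer and let p be its smallest prime factor. Then the minimum of the set {(1/d)·log(λ_{n/d}) : d is a divisor of n with d ≠ 1 and d ≠ n} is attained at d = p. -/
/-! Since `λ_k ^ k = 2 λ_k + 1`, we have `k · log λ_k = log (2 λ_k + 1)`, and `λ_k` decreases in `k`,
so `k ↦ k · log λ_k` is antitone. Writing `(1/d) · log λ_{n/d} = (n/d) · log λ_{n/d} / n`, the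
quantity to minimise is therefore antitone in `n/d`, hence monotone in `d`, and the smallest proper
divisor `d ≠ 1` of `n` is its smallest prime factor. -/

lemma pow_add_mul_sub_le_pow {α : Type*} [CommRing α] [LinearOrder α] [IsStrictOrderedRing α]
    {x y : α} (hx : 1 ≤ x) (hxy : x ≤ y) (k : ℕ) : x ^ k + k * (y - x) ≤ y ^ k := by
  induction k with
  | zero => simp
  | succ k ih =>
    have hxk : 1 ≤ x ^ k := one_le_pow₀ hx
    have hy : 1 ≤ y := hx.trans hxy
    have hmul : y * (x ^ k + k * (y - x)) ≤ y * y ^ k :=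
      mul_le_mul_of_nonneg_left ih (by linarith)
    rw [pow_succ, pow_succ]
    push_cast
    nlinarith [mul_nonneg (sub_nonneg.mpr hxy) (sub_nonneg.mpr hxk),
      mul_nonneg (mul_nonneg (Nat.cast_nonneg (α := α) k) (sub_nonneg.mpr hxy)) (sub_nonneg.mpr hy)]

/-- If `x < y`, then `y ^ b - x ^ b ≥ b (y - x) > 2 (y - x)` contradicts `y ^ b ≤ y ^ a = 2 y + 1`. -/
lemma le_of_pow_eq_two_mul_add_one {x y : ℝ} {a b : ℕ} (hb : 3 ≤ b) (hba : b ≤ a)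
    (hx : 1 ≤ x) (hxb : x ^ b = 2 * x + 1) (hy : 1 ≤ y) (hya : y ^ a = 2 * y + 1) : y ≤ x := by
  by_contra! hxy
  have hgap := pow_add_mul_sub_le_pow hx hxy.le b
  have hmono : y ^ b ≤ y ^ a := pow_le_pow_right₀ hy hba
  have hb' : (3 : ℝ) ≤ b := by exact_mod_cast hb
  nlinarith

lemma root_antitone {L : ℕ → ℝ} (hL : ∀ k, 3 ≤ k → 1 < L k ∧ L k ^ k = 2 * L k + 1)
    {a b : ℕ} (hb : 3 ≤ b) (hba : b ≤ a) : L a ≤ L b :=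
  le_of_pow_eq_two_mul_add_one hb hba (hL b hb).1.le (hL b hb).2
    (hL a (hb.trans hba)).1.le (hL a (hb.trans hba)).2

lemma mul_log_root_antitone {L : ℕ → ℝ} (hL : ∀ k, 3 ≤ k → 1 < L k ∧ L k ^ k = 2 * L k + 1)
    {a b : ℕ} (hb : 3 ≤ b) (hba : b ≤ a) :
    a * Real.log (L a) ≤ b * Real.log (L b) := by
  have ha : 1 < L a := (hL a (hb.trans hba)).1
  have hab := root_antitone hL hb hba
  rw [← Real.log_pow, ← Real.log_pow, (hL a (hb.trans hba)).2, (hL b hb).2]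
  exact Real.log_le_log (by linarith) (by linarith)

lemma one_div_mul_eq_div_mul_div {d n : ℕ} (hd : d ∣ n) (hn : n ≠ 0) (x : ℝ) :
    1 / (d : ℝ) * x = ((n / d : ℕ) : ℝ) * x / n := by
  have hd0 : d ≠ 0 := ne_zero_of_dvd_ne_zero hn hd
  rw [Nat.cast_div hd (by exact_mod_cast hd0)]
  field_simp

/-- For a composite `n ≥ 6` with smallest prime factor `p`, the minimum of the set
`{(1/d)·log(λ_{n/d}) : d ∣ n, d ≠ 1, d ≠ n}` is attained at `d = p`. -/
theorem min_at_smallest_prime (L : ℕ → ℝ)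
    (hL : ∀ k, 3 ≤ k → 1 < L k ∧ (L k) ^ k = 2 * L k + 1)
    (n : ℕ) (hn : 6 ≤ n) (hcomp : ¬ Nat.Prime n) (p : ℕ) (hp : p = n.minFac) :
    (p ∣ n ∧ p ≠ 1 ∧ p ≠ n) ∧
      ∀ d : ℕ, d ∣ n → d ≠ 1 → d ≠ n → 3 ≤ n / d →
        (1 / (p : ℝ)) * Real.log (L (n / p)) ≤ (1 / (d : ℝ)) * Real.log (L (n / d)) := by
  subst hp
  have hprime : n.minFac.Prime := Nat.minFac_prime (by omega)
  have hdvd : n.minFac ∣ n := Nat.minFac_dvd n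
  refine ⟨⟨hdvd, hprime.ne_one, fun h => hcomp (h ▸ hprime)⟩, ?_⟩
  intro d hd hd1 _ hnd
  have hd2 : 2 ≤ d := by
    have := Nat.pos_of_dvd_of_pos hd (by omega)
    omega
  have hle : n / d ≤ n / n.minFac :=
    Nat.div_le_div_left (Nat.minFac_le_of_dvd hd2 hd) hprime.pos
  rw [one_div_mul_eq_div_mul_div hdvd (by omega), one_div_mul_eq_div_mul_div hd (by omega)]
  exact div_le_div_of_nonneg_right (mul_log_root_antitone hL hnd hle) n.cast_nonneg
end

section
/- For every integer n ≥ 4, λ_n^p < λ_{n/p} whenever p ≥ 2 divides n and n/p ≥ 3; equivalently, log(λ_n) < log(λ_{n/p})/p. -/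
/-!
Put `c = λ_n ^ p`, so that `c ^ (n/p) = λ_n ^ n = 2 λ_n + 1 < 2 c + 1`, whereas
`λ_{n/p} ^ (n/p) = 2 λ_{n/p} + 1`. Since `x ↦ x ^ q - 2 x` is strictly increasing on `[1, ∞)`
for `q ≥ 2`, this forces `c < λ_{n/p}`.
-/

open Set

lemma strictMonoOn_pow_sub_two_mul {q : ℕ} (hq : 2 ≤ q) :
    StrictMonoOn (fun x : ℝ => x ^ q - 2 * x) (Ici 1) := by
  refine strictMonoOn_of_deriv_pos (convex_Ici 1) (by fun_prop) fun x hx => ?_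
  rw [interior_Ici, mem_Ioi] at hx
  have hpow : 1 < x ^ (q - 1) := one_lt_pow₀ hx (by omega)
  have hq' : (2 : ℝ) ≤ q := by exact_mod_cast hq
  have hderiv : HasDerivAt (fun x : ℝ => x ^ q - 2 * x) (q * x ^ (q - 1) - 2 * 1) x :=
    (hasDerivAt_pow q x).sub ((hasDerivAt_id x).const_mul 2)
  rw [hderiv.deriv]
  nlinarith

lemma lt_of_pow_lt_two_mul_add_one {q : ℕ} (hq : 2 ≤ q) {c b : ℝ} (hc : 1 ≤ c) (hb : 1 ≤ b)
    (hcq : c ^ q < 2 * c + 1) (hbq : b ^ q = 2 * b + 1) : c < b :=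
  (strictMonoOn_pow_sub_two_mul hq).lt_iff_lt hc hb |>.mp (by linarith)

theorem lambda_pow_lt_general (n p : ℕ) (hp : 2 ≤ p) (hdvd : p ∣ n)
    (hq : 3 ≤ n / p) (a b : ℝ)
    (ha1 : 1 < a) (ha2 : a ^ n = 2 * a + 1)
    (hb1 : 1 < b) (hb2 : b ^ (n / p) = 2 * b + 1) :
    a ^ p < b ∧ Real.log a < Real.log b / p := by
  obtain ⟨q, rfl⟩ := hdvd
  rw [Nat.mul_div_cancel_left q (by omega)] at hq hb2
  have ha_lt : a < a ^ p := by
    simpa using pow_lt_pow_right₀ ha1 (show 1 < p by omega)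
  have hapq : (a ^ p) ^ q < 2 * a ^ p + 1 := by
    rw [← pow_mul, ha2]
    linarith
  have hapb : a ^ p < b :=
    lt_of_pow_lt_two_mul_add_one (by omega) (one_le_pow₀ ha1.le) hb1.le hapq hb2
  refine ⟨hapb, ?_⟩
  have hlog : p * Real.log a < Real.log b := by
    rw [← Real.log_pow]
    exact Real.log_lt_log (by positivity) hapb
  rwa [lt_div_iff₀ (by positivity), mul_comm]

/-- For `n ≥ 4`, if `p ≥ 2` divides `n` and `n/p ≥ 3`, then `λ_n^p < λ_{n/p}`;
equivalently `log λ_n < log(λ_{n/p})/p`. -/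
theorem lambda_pow_lt (n p : ℕ) (hn : 4 ≤ n) (hp : 2 ≤ p) (hdvd : p ∣ n)
    (hq : 3 ≤ n / p) (a b : ℝ)
    (ha1 : 1 < a) (ha2 : a ^ n = 2 * a + 1)
    (hb1 : 1 < b) (hb2 : b ^ (n / p) = 2 * b + 1) :
    a ^ p < b ∧ Real.log a < Real.log b / p :=
  lambda_pow_lt_general n p hp hdvd hq a b ha1 ha2 hb1 hb2
end
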